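/- arXiv:2308.01359 — 2 statements merged into one kernel-verified Lean document; each statement's English description precedes it below -/
import Mathlib

section
/- Let G be a finite simple graph with maximum degree at most Δ, let C be a proper partial coloring of G² with colors from [Δ²+1], let K be a nonempty set of vertices, and let M be a colorful matching in K satisfying |M| ≥ ā_K (i.e., |M|·|K| ≥ Σ_{v∈K} a_v). Then |Ψ(K)| ≥ |K̊|, i.e., the clique palette of K contains at least as many colors as K has uncolored vertices. -/
open Finset

variable {V : Type*} [Fintype V] [DecidableEq V]

/-- Adjacency in the square graph `G²`: distinct vertices at distance at most 2 in `G`. -/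
def sqAdj (G : SimpleGraph V) (u v : V) : Prop :=
  u ≠ v ∧ (G.Adj u v ∨ ∃ w, G.Adj u w ∧ G.Adj w v)

instance (G : SimpleGraph V) [DecidableRel G.Adj] : DecidableRel (sqAdj G) := fun u v =>
  inferInstanceAs (Decidable (u ≠ v ∧ (G.Adj u v ∨ ∃ w, G.Adj u w ∧ G.Adj w v)))

/-- The distance-2 neighborhood `N²(v)`: the neighborhood of `v` in the square graph `G²`. -/
def N2 (G : SimpleGraph V) [DecidableRel G.Adj] (v : V) : Finset V :=
  univ.filter fun u => sqAdj G v u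

/-- `C` is a proper partial coloring of `G²`: two vertices adjacent in `G²`
that are both colored receive distinct colors. -/
def ProperPartial (G : SimpleGraph V) {n : ℕ} (C : V → Option (Fin n)) : Prop :=
  ∀ u v : V, sqAdj G u v → ∀ c : Fin n, C u = some c → C v ≠ some c

/-- `C(S)`: the set of colors used on the colored vertices of `S`. -/
def usedColors {n : ℕ} (C : V → Option (Fin n)) (S : Finset V) : Finset (Fin n) :=
  S.biUnion fun v => (C v).toFinset

/-- The palette of a set `S`: colors not used by any colored vertex of `S`.
For `S = K` this is the clique palette `Ψ(K)`; for `S = N²(v)` it is the palette `Ψ(v)`. -/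
def palette {n : ℕ} (C : V → Option (Fin n)) (S : Finset V) : Finset (Fin n) :=
  univ \ usedColors C S

/-- A colorful matching in `K` w.r.t. `C`: a collection of pairwise disjoint pairs of
distinct vertices of `K`, non-adjacent in `G²`, both colored with the same color. -/
def IsColorfulMatching (G : SimpleGraph V) {n : ℕ} (C : V → Option (Fin n))
    (K : Finset V) (M : Finset (V × V)) : Prop :=
  (∀ p ∈ M, p.1 ≠ p.2 ∧ p.1 ∈ K ∧ p.2 ∈ K ∧ ¬ sqAdj G p.1 p.2 ∧
      C p.1 ≠ none ∧ C p.1 = C p.2) ∧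
  ∀ p ∈ M, ∀ q ∈ M, p ≠ q → ({p.1, p.2} : Finset V) ∩ {q.1, q.2} = ∅

/-!
Pick `v ∈ K` of anti-degree at most `|M|` (one exists since `|M| ≥ ā_K`). As `|N²(v)| ≤ Δ²`,
this gives `|K| ≤ Δ² + |M|`. On the other hand the `2|M|` matched vertices of `K` carry at most
`|M|` colors and every other colored vertex at most one, so `|C(K)| ≤ |K| - |K̊| - |M|`.
Hence `|Ψ(K)| = Δ² + 1 - |C(K)| ≥ |K̊| + 1`.
-/

section SquareGraph

variable (G : SimpleGraph V) [DecidableRel G.Adj]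

lemma N2_subset_biUnion_neighborFinset (v : V) :
    N2 G v ⊆ (G.neighborFinset v).biUnion fun w => insert w ((G.neighborFinset w).erase v) := by
  intro u hu
  obtain ⟨hvu, hadj | ⟨w, hvw, hwu⟩⟩ := (mem_filter.1 hu).2
  · exact mem_biUnion.2 ⟨u, by simpa using hadj, mem_insert_self _ _⟩
  · exact mem_biUnion.2 ⟨w, by simpa using hvw,
      mem_insert_of_mem (mem_erase.2 ⟨hvu.symm, by simpa using hwu⟩)⟩

lemma card_N2_le_sq {Δ : ℕ} (hdeg : ∀ v, G.degree v ≤ Δ) (v : V) : (N2 G v).card ≤ Δ ^ 2 := by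
  calc (N2 G v).card
      ≤ ((G.neighborFinset v).biUnion fun w => insert w ((G.neighborFinset w).erase v)).card :=
        card_le_card (N2_subset_biUnion_neighborFinset G v)
    _ ≤ (G.neighborFinset v).card * Δ := by
        refine card_biUnion_le_card_mul _ _ _ fun w hw => ?_
        have hv : v ∈ G.neighborFinset w := by simpa [SimpleGraph.adj_comm] using hw
        calc (insert w ((G.neighborFinset w).erase v)).card
            ≤ ((G.neighborFinset w).erase v).card + 1 := card_insert_le _ _
          _ = G.degree w := by rw [card_erase_add_one hv, G.card_neighborFinset_eq_degree]
          _ ≤ Δ := hdeg w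
    _ ≤ Δ ^ 2 := by
        rw [G.card_neighborFinset_eq_degree, sq]
        exact Nat.mul_le_mul_right _ (hdeg v)

end SquareGraph

section Colors

variable {n : ℕ} (C : V → Option (Fin n))

omit [Fintype V] [DecidableEq V] in
lemma card_palette_add_card_usedColors (S : Finset V) :
    (palette C S).card + (usedColors C S).card = n := by
  rw [palette, ← compl_eq_univ_sdiff, card_compl_add_card, Fintype.card_fin]

omit [Fintype V] in
lemma usedColors_union (S T : Finset V) :
    usedColors C (S ∪ T) = usedColors C S ∪ usedColors C T :=
  union_biUnion

omit [Fintype V] [DecidableEq V] in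
lemma card_usedColors_le_card_colored (S : Finset V) :
    (usedColors C S).card ≤ (S.filter fun v => C v ≠ none).card := by
  have : usedColors C S = usedColors C (S.filter fun v => C v ≠ none) := by
    ext c
    simp only [usedColors, mem_biUnion, mem_filter, Option.mem_toFinset, Option.mem_def]
    exact ⟨fun ⟨v, hv, hc⟩ => ⟨v, ⟨hv, by simp [hc]⟩, hc⟩, fun ⟨v, ⟨hv, _⟩, hc⟩ => ⟨v, hv, hc⟩⟩
  rw [this, usedColors]
  refine (card_biUnion_le_card_mul _ _ 1 fun v _ => ?_).trans (mul_one _).le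
  rw [Option.card_toFinset]
  cases C v <;> simp

def matchedVertices (M : Finset (V × V)) : Finset V :=
  M.biUnion fun p => {p.1, p.2}

variable {G : SimpleGraph V} {C} {K : Finset V} {M : Finset (V × V)}

omit [Fintype V] in
lemma IsColorfulMatching.card_matchedVertices (hM : IsColorfulMatching G C K M) :
    (matchedVertices M).card = 2 * M.card := by
  rw [matchedVertices, card_biUnion fun p hp q hq hpq =>
    disjoint_iff_inter_eq_empty.2 (hM.2 p hp q hq hpq)]
  rw [sum_congr rfl fun p hp => card_pair (hM.1 p hp).1, sum_const, smul_eq_mul, mul_comm]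

omit [Fintype V] in
lemma IsColorfulMatching.matchedVertices_subset_colored (hM : IsColorfulMatching G C K M) :
    matchedVertices M ⊆ K.filter fun v => C v ≠ none := by
  intro u hu
  obtain ⟨p, hp, hu⟩ := mem_biUnion.1 hu
  obtain ⟨-, h1K, h2K, -, hcol, hsame⟩ := hM.1 p hp
  rcases mem_insert.1 hu with rfl | hu
  · exact mem_filter.2 ⟨h1K, hcol⟩
  · rw [mem_singleton.1 hu]
    exact mem_filter.2 ⟨h2K, hsame ▸ hcol⟩

omit [Fintype V] in
lemma IsColorfulMatching.card_usedColors_matchedVertices_le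
    (hM : IsColorfulMatching G C K M) : (usedColors C (matchedVertices M)).card ≤ M.card := by
  have : usedColors C (matchedVertices M) = M.biUnion fun p => (C p.1).toFinset := by
    rw [usedColors, matchedVertices, biUnion_biUnion]
    refine biUnion_congr rfl fun p hp => ?_
    obtain ⟨-, -, -, -, -, hsame⟩ := hM.1 p hp
    rw [biUnion_insert, singleton_biUnion, ← hsame, union_self]
  rw [this]
  refine (card_biUnion_le_card_mul _ _ 1 fun p _ => ?_).trans (mul_one _).le
  rw [Option.card_toFinset]
  cases C p.1 <;> simp

omit [Fintype V] in
/-- Each matched pair saves one color. -/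
lemma IsColorfulMatching.card_usedColors_add_card_le (hM : IsColorfulMatching G C K M) :
    (usedColors C K).card + M.card ≤ (K.filter fun v => C v ≠ none).card := by
  set Mv := matchedVertices M
  have hsub : Mv ⊆ K.filter fun v => C v ≠ none := hM.matchedVertices_subset_colored
  have hsplit : usedColors C K = usedColors C (K \ Mv) ∪ usedColors C Mv := by
    rw [← usedColors_union, sdiff_union_of_subset (hsub.trans (filter_subset _ _))]
  have hrest : ((K \ Mv).filter fun v => C v ≠ none) ⊆ (K.filter fun v => C v ≠ none) \ Mv := by
    intro v hv
    simp only [mem_filter, mem_sdiff] at hv ⊢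
    tauto
  calc (usedColors C K).card + M.card
      ≤ (usedColors C (K \ Mv)).card + (usedColors C Mv).card + M.card := by
        rw [hsplit]
        gcongr
        exact card_union_le _ _
    _ ≤ ((K.filter fun v => C v ≠ none) \ Mv).card + Mv.card := by
        have hMv : Mv.card = 2 * M.card := hM.card_matchedVertices
        have hcolorsMv : (usedColors C Mv).card ≤ M.card := hM.card_usedColors_matchedVertices_le
        have := (card_usedColors_le_card_colored C (K \ Mv)).trans (card_le_card hrest)
        omega
    _ = (K.filter fun v => C v ≠ none).card := card_sdiff_add_card_eq_card hsub

end Colors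

theorem cliquePalette_ge_uncolored_general (G : SimpleGraph V) [DecidableRel G.Adj] (Δ : ℕ)
    (hdeg : ∀ v, G.degree v ≤ Δ)
    (C : V → Option (Fin (Δ ^ 2 + 1)))
    (K : Finset V) (hK : K.Nonempty)
    (M : Finset (V × V)) (hM : IsColorfulMatching G C K M)
    (hsize : ∑ v ∈ K, (K \ N2 G v).card ≤ M.card * K.card) :
    (K.filter fun v => C v = none).card ≤ (palette C K).card := by
  obtain ⟨v, -, hv⟩ : ∃ v ∈ K, (K \ N2 G v).card ≤ M.card :=
    exists_le_of_sum_le hK (by simpa [mul_comm] using hsize)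
  have hKcard : K.card ≤ Δ ^ 2 + M.card :=
    calc K.card ≤ (K \ N2 G v).card + (N2 G v).card := card_le_card_sdiff_add_card
      _ ≤ M.card + Δ ^ 2 := add_le_add hv (card_N2_le_sq G hdeg v)
      _ = Δ ^ 2 + M.card := add_comm _ _
  have hcolored := hM.card_usedColors_add_card_le
  have hpalette := card_palette_add_card_usedColors C K
  have hsplit : (K.filter fun v => C v = none).card + (K.filter fun v => C v ≠ none).card =
      K.card := card_filter_add_card_filter_not _
  omega

/-- If `K` has a colorful matching `M` with `|M| ≥ ā_K` (i.e. `|M|·|K| ≥ Σ_{v∈K} a_v`),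
then the clique palette of `K` contains at least as many colors as `K` has
uncolored vertices: `|Ψ(K)| ≥ |K̊|`. -/
theorem cliquePalette_ge_uncolored (G : SimpleGraph V) [DecidableRel G.Adj] (Δ : ℕ)
    (hdeg : ∀ v, G.degree v ≤ Δ)
    (C : V → Option (Fin (Δ ^ 2 + 1))) (hC : ProperPartial G C)
    (K : Finset V) (hK : K.Nonempty)
    (M : Finset (V × V)) (hM : IsColorfulMatching G C K M)
    (hsize : ∑ v ∈ K, (K \ N2 G v).card ≤ M.card * K.card) :
    (K.filter fun v => C v = none).card ≤ (palette C K).card :=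
  cliquePalette_ge_uncolored_general G Δ hdeg C K hK M hM hsize
end

section
/- Let G be a finite simple graph with maximum degree at most Δ, let C be a proper partial coloring of G² with colors from [Δ²+1], let K be a set of vertices, and let v ∈ K. Then |Ψ(v) \ Ψ(K)| ≤ a_v: the number of colors available to v but missing from the clique palette of K is at most the anti-degree of v. -/
open Finset

variable {V : Type*} [Fintype V] [DecidableEq V]

/-- `|Ψ(v) \ Ψ(K)| ≤ a_v`: the number of colors available to `v` but missing from
the clique palette of `K` is at most the anti-degree of `v`. -/
theorem palette_diff_cliquePalette_le_antiDeg
    (G : SimpleGraph V) [DecidableRel G.Adj] (Δ : ℕ)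
    (hdeg : ∀ v, G.degree v ≤ Δ)
    (C : V → Option (Fin (Δ ^ 2 + 1))) (hC : ProperPartial G C)
    (K : Finset V) (v : V) (hv : v ∈ K) :
    (palette C (N2 G v) \ palette C K).card ≤ (K \ N2 G v).card := by
  classical
  have key : ∀ c ∈ palette C (N2 G v) \ palette C K, ∃ u ∈ K \ N2 G v, C u = some c := by
    intro c hc
    simp only [mem_sdiff, palette, mem_univ, true_and, not_not, usedColors, mem_biUnion,
      Option.mem_toFinset, Option.mem_def, not_exists, not_and] at hc
    obtain ⟨hc1, hc2⟩ := hc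
    push_neg at hc2
    obtain ⟨u, huK, hu⟩ := hc2
    exact ⟨u, mem_sdiff.2 ⟨huK, fun hN => hc1 u hN hu⟩, hu⟩
  have hsub : palette C (N2 G v) \ palette C K ⊆
      (K \ N2 G v).image fun u => (C u).getD 0 := by
    intro c hc
    obtain ⟨u, hu, hCu⟩ := key c hc
    exact mem_image.2 ⟨u, hu, by rw [hCu]; rfl⟩
  exact (Finset.card_le_card hsub).trans Finset.card_image_le
end
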